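/- Let f : [a,b] → ℝ be positive, integrable, and convex on [a,b] with 0 ≤ a < b, and let α > 0. Then f((a+b)/2) ≤ (Γ(α+1)/(2(b-a)^α)) [J^α_{a+}f(b) + J^α_{b-}f(a)] ≤ (f(a)+f(b))/2. -/

import Mathlib

/-! The reflection `t ↦ a + b - t` turns the right-sided integral into the left-sided one, so
the bracket is `∫ₐᵇ (t - a)^(α-1) (f (a + b - t) + f t) dt`. By convexity the second factor lies
between `2 f ((a + b) / 2)` (the midpoint of `t` and its reflection) and `f a + f b` (the chord
bounds at `t` and at its reflection add up to it). Since `∫ₐᵇ (t - a)^(α-1) dt = (b - a)^α / α`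
and `Γ(α + 1) = α Γ(α)`, integrating these bounds against the weight gives the two inequalities. -/

open MeasureTheory intervalIntegral Real Set

section Convex

variable {a b t : ℝ} {f : ℝ → ℝ}

lemma add_sub_mem_Icc (ht : t ∈ Icc a b) : a + b - t ∈ Icc a b :=
  ⟨by linarith [ht.2], by linarith [ht.1]⟩

lemma ConvexOn.le_chord_of_mem_Icc (hf : ConvexOn ℝ (Icc a b) f) (hab : a < b)
    (ht : t ∈ Icc a b) : f t ≤ (b - t) / (b - a) * f a + (t - a) / (b - a) * f b := by
  have hba : 0 < b - a := sub_pos.2 hab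
  have h := hf.2 (left_mem_Icc.2 hab.le) (right_mem_Icc.2 hab.le)
    (div_nonneg (sub_nonneg.2 ht.2) hba.le) (div_nonneg (sub_nonneg.2 ht.1) hba.le)
    (by field_simp; ring)
  have hcomb : (b - t) / (b - a) * a + (t - a) / (b - a) * b = t := by field_simp; ring
  simpa only [smul_eq_mul, hcomb] using h

lemma ConvexOn.add_sub_add_le (hf : ConvexOn ℝ (Icc a b) f) (hab : a < b)
    (ht : t ∈ Icc a b) : f (a + b - t) + f t ≤ f a + f b := by
  have h₁ := hf.le_chord_of_mem_Icc hab ht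
  have h₂ := hf.le_chord_of_mem_Icc hab (add_sub_mem_Icc ht)
  have hba : b - a ≠ 0 := (sub_pos.2 hab).ne'
  have hsum : (b - (a + b - t)) / (b - a) * f a + (a + b - t - a) / (b - a) * f b
      + ((b - t) / (b - a) * f a + (t - a) / (b - a) * f b) = f a + f b := by
    field_simp; ring
  linarith

lemma ConvexOn.two_mul_midpoint_le (hf : ConvexOn ℝ (Icc a b) f) (ht : t ∈ Icc a b) :
    2 * f ((a + b) / 2) ≤ f (a + b - t) + f t := by
  have h := hf.2 ht (add_sub_mem_Icc ht) (by norm_num : (0 : ℝ) ≤ 1 / 2)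
    (by norm_num : (0 : ℝ) ≤ 1 / 2) (by norm_num)
  simp only [smul_eq_mul] at h
  rw [show 1 / 2 * t + 1 / 2 * (a + b - t) = (a + b) / 2 by ring] at h
  linarith

lemma ConvexOn.exists_forall_abs_le (hf : ConvexOn ℝ (Icc a b) f) :
    ∃ C, ∀ t ∈ Icc a b, |f t| ≤ C := by
  refine ⟨max |2 * f ((a + b) / 2) - max (f a) (f b)| |max (f a) (f b)|, fun t ht => ?_⟩
  have hab : a ≤ b := ht.1.trans ht.2
  have hle {s : ℝ} (hs : s ∈ Icc a b) : f s ≤ max (f a) (f b) :=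
    hf.le_max_of_mem_Icc (left_mem_Icc.2 hab) (right_mem_Icc.2 hab) hs
  have hlower : 2 * f ((a + b) / 2) - max (f a) (f b) ≤ f t := by
    linarith [hf.two_mul_midpoint_le ht, hle (add_sub_mem_Icc ht)]
  exact abs_le_max_abs_abs hlower (hle ht)

end Convex

section Integral

variable {a b r : ℝ}

lemma intervalIntegrable_sub_rpow (hr : -1 < r) :
    IntervalIntegrable (fun t => (t - a) ^ r) volume a b := by
  simpa using (intervalIntegrable_rpow' (a := 0) (b := b - a) hr).comp_sub_right a

lemma integral_sub_rpow {α : ℝ} (hα : 0 < α) :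
    ∫ t in a..b, (t - a) ^ (α - 1) = (b - a) ^ α / α := by
  rw [integral_comp_sub_right (fun x => x ^ (α - 1)) a, sub_self,
    integral_rpow (Or.inl (by linarith)), sub_add_cancel, zero_rpow hα.ne', sub_zero]

lemma IntervalIntegrable.sub_rpow_mul {g : ℝ → ℝ} {C : ℝ} (hr : -1 < r) (hab : a ≤ b)
    (hg : IntervalIntegrable g volume a b) (hC : ∀ t ∈ Icc a b, |g t| ≤ C) :
    IntervalIntegrable (fun t => (t - a) ^ r * g t) volume a b := by
  have hw : IntervalIntegrable (fun t => (t - a) ^ r) volume a b := intervalIntegrable_sub_rpow hr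
  rw [intervalIntegrable_iff_integrableOn_Ioc_of_le hab] at hw hg ⊢
  refine hw.mul_bdd (c := C) hg.aestronglyMeasurable
    (ae_restrict_of_forall_mem measurableSet_Ioc fun t ht => ?_)
  simpa only [Real.norm_eq_abs] using hC t (Ioc_subset_Icc_self ht)

lemma integral_comp_add_sub (g : ℝ → ℝ) : ∫ t in a..b, g (a + b - t) = ∫ t in a..b, g t := by
  simp [integral_comp_sub_left g (a + b)]

lemma integral_mul_mem_Icc {w g : ℝ → ℝ} {m M : ℝ} (hab : a ≤ b)
    (hw : IntervalIntegrable w volume a b) (hw₀ : ∀ t ∈ Icc a b, 0 ≤ w t)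
    (hwg : IntervalIntegrable (fun t => w t * g t) volume a b)
    (hg : ∀ t ∈ Icc a b, g t ∈ Icc m M) :
    ∫ t in a..b, w t * g t ∈ Icc ((∫ t in a..b, w t) * m) ((∫ t in a..b, w t) * M) := by
  rw [← intervalIntegral.integral_mul_const, ← intervalIntegral.integral_mul_const]
  exact ⟨integral_mono_on hab (hw.mul_const m) hwg fun t ht =>
      mul_le_mul_of_nonneg_left (hg t ht).1 (hw₀ t ht),
    integral_mono_on hab hwg (hw.mul_const M) fun t ht =>
      mul_le_mul_of_nonneg_left (hg t ht).2 (hw₀ t ht)⟩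

end Integral

theorem ConvexOn.integral_rpow_mul_add_mem_Icc {a b α : ℝ} {f : ℝ → ℝ}
    (hf : ConvexOn ℝ (Icc a b) f) (hint : IntervalIntegrable f volume a b) (hab : a < b)
    (hα : 0 < α) :
    (∫ t in a..b, (b - t) ^ (α - 1) * f t) + (∫ t in a..b, (t - a) ^ (α - 1) * f t) ∈
      Icc ((b - a) ^ α / α * (2 * f ((a + b) / 2))) ((b - a) ^ α / α * (f a + f b)) := by
  have hr : -1 < α - 1 := by linarith
  obtain ⟨C, hC⟩ := hf.exists_forall_abs_le
  have hint_refl : IntervalIntegrable (fun t => f (a + b - t)) volume a b := by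
    simpa using (hint.comp_sub_left (a + b)).symm
  have hI : IntervalIntegrable (fun t => (t - a) ^ (α - 1) * f t) volume a b :=
    hint.sub_rpow_mul hr hab.le hC
  have hI_refl : IntervalIntegrable (fun t => (t - a) ^ (α - 1) * f (a + b - t)) volume a b :=
    hint_refl.sub_rpow_mul hr hab.le fun t ht => hC _ (add_sub_mem_Icc ht)
  have hsum : (∫ t in a..b, (b - t) ^ (α - 1) * f t) + (∫ t in a..b, (t - a) ^ (α - 1) * f t)
      = ∫ t in a..b, (t - a) ^ (α - 1) * (f (a + b - t) + f t) := by
    simp only [← integral_comp_add_sub (fun t => (b - t) ^ (α - 1) * f t),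
      show ∀ t, b - (a + b - t) = t - a from fun t => by ring, ← integral_add hI_refl hI,
      mul_add]
  rw [hsum, ← integral_sub_rpow hα]
  refine integral_mul_mem_Icc hab.le (intervalIntegrable_sub_rpow hr)
    (fun t ht => rpow_nonneg (sub_nonneg.2 ht.1) _) ?_
    fun t ht => ⟨hf.two_mul_midpoint_le ht, hf.add_sub_add_le hab ht⟩
  simpa only [mul_add] using hI_refl.add hI

theorem hh_riemann_liouville_general (a b α : ℝ) (hab : a < b) (hα : 0 < α)
    (f : ℝ → ℝ)
    (hint : IntervalIntegrable f volume a b)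
    (hconv : ConvexOn ℝ (Set.Icc a b) f) :
    f ((a + b) / 2) ≤
      (Real.Gamma (α + 1) / (2 * (b - a) ^ α)) *
        ((1 / Real.Gamma α) * (∫ t in a..b, (b - t) ^ (α - 1) * f t) +
         (1 / Real.Gamma α) * (∫ t in a..b, (t - a) ^ (α - 1) * f t)) ∧
    (Real.Gamma (α + 1) / (2 * (b - a) ^ α)) *
        ((1 / Real.Gamma α) * (∫ t in a..b, (b - t) ^ (α - 1) * f t) +
         (1 / Real.Gamma α) * (∫ t in a..b, (t - a) ^ (α - 1) * f t)) ≤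
      (f a + f b) / 2 := by
  obtain ⟨hlower, hupper⟩ := hconv.integral_rpow_mul_add_mem_Icc hint hab hα
  have hP : 0 < (b - a) ^ α := rpow_pos_of_pos (sub_pos.2 hab) α
  have hΓ : Gamma α ≠ 0 := (Gamma_pos_of_pos hα).ne'
  have hnormalise : Gamma (α + 1) / (2 * (b - a) ^ α) *
      (1 / Gamma α * (∫ t in a..b, (b - t) ^ (α - 1) * f t) +
        1 / Gamma α * (∫ t in a..b, (t - a) ^ (α - 1) * f t)) =
      α / (2 * (b - a) ^ α) *
        ((∫ t in a..b, (b - t) ^ (α - 1) * f t) + ∫ t in a..b, (t - a) ^ (α - 1) * f t) := by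
    rw [Gamma_add_one hα.ne']
    field_simp
  rw [hnormalise]
  constructor
  · calc f ((a + b) / 2)
        = α / (2 * (b - a) ^ α) * ((b - a) ^ α / α * (2 * f ((a + b) / 2))) := by field_simp
      _ ≤ _ := by gcongr
  · calc _ ≤ α / (2 * (b - a) ^ α) * ((b - a) ^ α / α * (f a + f b)) := by gcongr
      _ = (f a + f b) / 2 := by field_simp

theorem hh_riemann_liouville (a b α : ℝ) (ha : 0 ≤ a) (hab : a < b) (hα : 0 < α)
    (f : ℝ → ℝ)
    (hpos : ∀ x ∈ Set.Icc a b, 0 < f x)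
    (hint : IntervalIntegrable f volume a b)
    (hconv : ConvexOn ℝ (Set.Icc a b) f) :
    f ((a + b) / 2) ≤
      (Real.Gamma (α + 1) / (2 * (b - a) ^ α)) *
        ((1 / Real.Gamma α) * (∫ t in a..b, (b - t) ^ (α - 1) * f t) +
         (1 / Real.Gamma α) * (∫ t in a..b, (t - a) ^ (α - 1) * f t)) ∧
    (Real.Gamma (α + 1) / (2 * (b - a) ^ α)) *
        ((1 / Real.Gamma α) * (∫ t in a..b, (b - t) ^ (α - 1) * f t) +
         (1 / Real.Gamma α) * (∫ t in a..b, (t - a) ^ (α - 1) * f t)) ≤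
      (f a + f b) / 2 :=
  hh_riemann_liouville_general a b α hab hα f hint hconv
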